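/- arXiv:math/0403373 — 7 statements merged into one kernel-verified Lean document; each statement's English description precedes it below -/
import Mathlib

section
/- Let μ_g be a Borel probability measure on ℝ^K whose support is contained in the unit affine plane {g : Σ_{k=1}^K g_k = 1}, with ∫ ∏_{i=1}^m |g_{k_i}| dμ_g < ∞ for every m ≤ J and every (k_1,…,k_m) ∈ {1,…,K}^m, and let λ^1,…,λ^K ∈ Ω. Define, for every partial outcome (S,ℓ), M_ℓ = ∫ ∏_{j∈S} (Σ_{k=1}^K g_k λ^k_{j,ℓ_j}) dμ_g, and for every v ∈ ℕ^K with |v| + |S| ≤ J, h^v_ℓ = ∫ (∏_{k=1}^K g_k^{v_k}) · ∏_{j∈S} (Σ_{k=1}^K g_k λ^k_{j,ℓ_j}) dμ_g. Then α^k = λ^k (k = 1,…,K) together with the h^v_ℓ form a solution of the system (MainEqSys) with data {M_ℓ}. -/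
open MeasureTheory

/-- The system (MainEqSys) of the paper, with data `M` indexed by partial outcomes
(encoded as a pair of a `Finset S` and a total outcome vector, only the values on `S`
being relevant) and unknowns `α¹,…,αᴷ ∈ Ω` and `h^v_ℓ`.  The first clause states that
`h` is genuinely indexed by partial outcomes (it only depends on `ℓ` through its
restriction to `S`); the remaining clauses are equations (i), (ii), (iii). -/
def MainEqSys (J K : ℕ) (L : Fin J → ℕ)
    (M : Finset (Fin J) → ((j : Fin J) → Fin (L j)) → ℝ)
    (α : Fin K → (j : Fin J) → Fin (L j) → ℝ)
    (h : (Fin K → ℕ) → Finset (Fin J) → ((j : Fin J) → Fin (L j)) → ℝ) : Prop :=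
  (∀ (v : Fin K → ℕ) (S : Finset (Fin J)) (ℓ ℓ' : (j : Fin J) → Fin (L j)),
      (∀ j ∈ S, ℓ j = ℓ' j) → h v S ℓ = h v S ℓ') ∧
  (∀ (v : Fin K → ℕ) (S : Finset (Fin J)) (ℓ : (j : Fin J) → Fin (L j))
      (j : Fin J) (l : Fin (L j)),
      (∑ k, v k) + S.card + 1 ≤ J → j ∉ S →
      (∑ k, α k j l * h (v + Pi.single k 1) S ℓ) =
        h v (insert j S) (Function.update ℓ j l)) ∧
  (∀ (S : Finset (Fin J)) (ℓ : (j : Fin J) → Fin (L j)), h 0 S ℓ = M S ℓ) ∧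
  (∀ J' : ℕ, J' ≤ J → ∀ ℓ : (j : Fin J) → Fin (L j),
      ∑ v ∈ (Fintype.piFinset fun _ : Fin K => Finset.range (J' + 1)).filter
          (fun v => ∑ k, v k = J'),
        (Nat.multinomial Finset.univ v : ℝ) * h v ∅ ℓ = 1)

section aux
variable {J K : ℕ} {μg : Measure (Fin K → ℝ)}

/-- A monomial of degree ≤ J is integrable. -/
lemma integrable_mono (hint : ∀ m : ℕ, m ≤ J → ∀ κ : Fin m → Fin K,
      Integrable (fun g => ∏ i, |g (κ i)|) μg)
    (m : ℕ) (hm : m ≤ J) (κ : Fin m → Fin K) :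
    Integrable (fun g : Fin K → ℝ => ∏ i, g (κ i)) μg := by
  refine (hint m hm κ).mono' ?_ ?_
  · exact (Finset.measurable_prod Finset.univ
      (fun i _ => measurable_pi_apply (κ i))).aestronglyMeasurable
  · filter_upwards with g
    rw [Real.norm_eq_abs, Finset.abs_prod]

/-- A product of at most J linear forms is integrable. -/
lemma integrable_forms (hint : ∀ m : ℕ, m ≤ J → ∀ κ : Fin m → Fin K,
      Integrable (fun g => ∏ i, |g (κ i)|) μg)
    {ι : Type*} [Fintype ι] [DecidableEq ι] (hm : Fintype.card ι ≤ J)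
    (c : ι → Fin K → ℝ) :
    Integrable (fun g : Fin K → ℝ => ∏ i, ∑ k, c i k * g k) μg := by
  have hrw : (fun g : Fin K → ℝ => ∏ i, ∑ k, c i k * g k)
      = fun g => ∑ κ ∈ Fintype.piFinset (fun _ : ι => (Finset.univ : Finset (Fin K))),
          (∏ i, c i (κ i)) * ∏ i, g (κ i) := by
    funext g
    rw [Finset.prod_univ_sum]
    exact Finset.sum_congr rfl fun κ _ => by rw [Finset.prod_mul_distrib]
  rw [hrw]
  refine integrable_finset_sum _ fun κ _ => Integrable.const_mul ?_ _
  have e := Fintype.equivFin ι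
  have : (fun g : Fin K → ℝ => ∏ i, g (κ i))
      = fun g => ∏ i : Fin (Fintype.card ι), g (κ (e.symm i)) := by
    funext g
    exact (Equiv.prod_comp e.symm fun i => g (κ i)).symm
  rw [this]
  exact integrable_mono hint _ hm _

end aux

section aux2
variable {J K : ℕ} {μg : Measure (Fin K → ℝ)}
lemma integrable_h (hint : ∀ m : ℕ, m ≤ J → ∀ κ : Fin m → Fin K,
      Integrable (fun g => ∏ i, |g (κ i)|) μg)
    (f : Fin J → Fin K → ℝ) (v : Fin K → ℕ) (S : Finset (Fin J))
    (hd : (∑ k, v k) + S.card ≤ J) :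
    Integrable (fun g : Fin K → ℝ =>
      (∏ k, g k ^ v k) * ∏ j ∈ S, (∑ k, g k * f j k)) μg := by
  classical
  set ι := (Σ k : Fin K, Fin (v k)) ⊕ {j // j ∈ S} with hι
  have hcard : Fintype.card ι ≤ J := by
    simp only [hι, Fintype.card_sum, Fintype.card_sigma, Fintype.card_fin, Fintype.card_coe]
    exact hd
  set c : ι → Fin K → ℝ := fun i => match i with
    | Sum.inl ⟨k, _⟩ => Pi.single k (1 : ℝ)
    | Sum.inr ⟨j, _⟩ => f j
  have hrw : (fun g : Fin K → ℝ => (∏ k, g k ^ v k) * ∏ j ∈ S, (∑ k, g k * f j k))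
      = fun g => ∏ i : ι, ∑ k, c i k * g k := by
    funext g
    rw [Fintype.prod_sum_type]
    congr 1
    · rw [← Finset.univ_sigma_univ, Finset.prod_sigma]
      refine Finset.prod_congr rfl fun k _ => ?_
      have h1 : ∀ i : Fin (v k), (∑ k', c (Sum.inl ⟨k, i⟩) k' * g k') = g k := by
        intro i
        simp [c, Pi.single_apply]
      rw [Finset.prod_congr rfl (fun i _ => h1 i), Finset.prod_const,
        Finset.card_univ, Fintype.card_fin]
    · rw [← Finset.prod_coe_sort S]
      refine Finset.prod_congr rfl fun j _ => ?_
      exact Finset.sum_congr rfl fun k _ => by simp [c, mul_comm]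
  rw [hrw]
  exact integrable_forms hint hcard c

end aux2


/-- Theorem `Main1`. If `μ_g` is a probability measure on `ℝ^K`
supported in the unit affine plane with all mixed absolute moments of order `≤ J`
finite, then `αᵏ = λᵏ` together with
`h^v_ℓ = ∫ (∏_k g_k^{v_k}) · ∏_{j∈S} (Σ_k g_k λᵏ_{j,ℓ_j}) dμ_g`
(`= M_ℓ(μ_β)·E(G^v | X = ℓ)`) solve the system (MainEqSys) with data
`M_ℓ = ∫ ∏_{j∈S} (Σ_k g_k λᵏ_{j,ℓ_j}) dμ_g = M_ℓ(μ_β)`. -/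
theorem stmt10 (J K : ℕ) (hJ : 0 < J) (hK : 0 < K) (L : Fin J → ℕ) (hL : ∀ j, 0 < L j)
    (lam : Fin K → (j : Fin J) → Fin (L j) → ℝ)
    (μg : Measure (Fin K → ℝ)) [IsProbabilityMeasure μg]
    (hsupp : μg {g | ∑ k, g k = 1} = 1)
    (hint : ∀ m : ℕ, m ≤ J → ∀ κ : Fin m → Fin K,
      Integrable (fun g => ∏ i, |g (κ i)|) μg) :
    MainEqSys J K L
      (fun S ℓ => ∫ g, ∏ j ∈ S, (∑ k, g k * lam k j (ℓ j)) ∂μg)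
      lam
      (fun v S ℓ =>
        ∫ g, (∏ k, g k ^ v k) * ∏ j ∈ S, (∑ k, g k * lam k j (ℓ j)) ∂μg) := by
  classical
  refine ⟨?_, ?_, ?_, ?_⟩
  · -- clause: h depends only on restriction
    intro v S ℓ ℓ' hag
    refine congrArg (integral μg) (funext fun g => ?_)
    congr 1
    exact Finset.prod_congr rfl fun j hj => by rw [hag j hj]
  · -- equation (i)
    intro v S ℓ j l hle hj
    have hsum1 : ∀ k : Fin K, (∑ k', (v + Pi.single k 1 : Fin K → ℕ) k') = (∑ k', v k') + 1 := by
      intro k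
      simp only [Pi.add_apply, Finset.sum_add_distrib]
      congr 1
      simp [Pi.single_apply]
    have hd1 : ∀ k : Fin K, (∑ k', (v + Pi.single k 1 : Fin K → ℕ) k') + S.card ≤ J := by
      intro k; rw [hsum1 k]; omega
    have key : ∀ (g : Fin K → ℝ) (k : Fin K),
        ∏ k', g k' ^ (v + Pi.single k 1 : Fin K → ℕ) k' = g k * ∏ k', g k' ^ v k' := by
      intro g k
      simp only [Pi.add_apply, pow_add, Finset.prod_mul_distrib]
      rw [mul_comm]
      congr 1
      simp [Pi.single_apply, pow_ite]
    calc (∑ k, lam k j l * ∫ g,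
            (∏ k', g k' ^ (v + Pi.single k 1 : Fin K → ℕ) k') *
              ∏ j' ∈ S, (∑ k', g k' * lam k' j' (ℓ j')) ∂μg)
        = ∑ k, ∫ g, lam k j l * ((∏ k', g k' ^ (v + Pi.single k 1 : Fin K → ℕ) k') *
              ∏ j' ∈ S, (∑ k', g k' * lam k' j' (ℓ j'))) ∂μg := by
          exact Finset.sum_congr rfl fun k _ => (integral_const_mul _ _).symm
      _ = ∫ g, ∑ k, lam k j l * ((∏ k', g k' ^ (v + Pi.single k 1 : Fin K → ℕ) k') *
              ∏ j' ∈ S, (∑ k', g k' * lam k' j' (ℓ j'))) ∂μg := by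
          exact (integral_finset_sum _ fun k _ =>
            (integrable_h hint (fun j' k' => lam k' j' (ℓ j')) _ S (hd1 k)).const_mul _).symm
      _ = ∫ g, (∏ k', g k' ^ v k') *
              ∏ j' ∈ insert j S, (∑ k', g k' * lam k' j'
                (Function.update ℓ j l j')) ∂μg := by
          congr 1
          funext g
          rw [Finset.prod_insert hj]
          have hupd : ∏ j' ∈ S, (∑ k', g k' * lam k' j' (Function.update ℓ j l j'))
              = ∏ j' ∈ S, (∑ k', g k' * lam k' j' (ℓ j')) := by
            refine Finset.prod_congr rfl fun j' hj' => ?_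
            have : j' ≠ j := fun hE => hj (hE ▸ hj')
            rw [Function.update_of_ne this]
          rw [hupd, Function.update_self]
          rw [Finset.sum_mul, Finset.mul_sum]
          exact Finset.sum_congr rfl fun k _ => by rw [key g k]; ring
  · -- equation (ii)
    intro S ℓ
    simp
  · -- equation (iii)
    intro J' hJ' ℓ
    have hset : (Fintype.piFinset fun _ : Fin K => Finset.range (J' + 1)).filter
          (fun v => ∑ k, v k = J') = Finset.piAntidiag Finset.univ J' := by
      ext v
      simp only [Finset.mem_filter, Fintype.mem_piFinset, Finset.mem_range,
        Nat.lt_succ_iff, Finset.mem_piAntidiag]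
      constructor
      · rintro ⟨-, h2⟩; exact ⟨h2, fun i _ => Finset.mem_univ i⟩
      · rintro ⟨h1, -⟩
        exact ⟨fun k => h1 ▸ Finset.single_le_sum
          (f := v) (fun _ _ => Nat.zero_le _) (Finset.mem_univ k), h1⟩
    have hae : ∀ᵐ g ∂μg, ∑ k, g k = 1 := by
      have hmeas : MeasurableSet {g : Fin K → ℝ | ∑ k, g k = 1} := by
        exact measurableSet_eq_fun (by measurability) measurable_const
      rw [ae_iff]
      have : {g : Fin K → ℝ | ¬ ∑ k, g k = 1} = {g : Fin K → ℝ | ∑ k, g k = 1}ᶜ := rfl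
      rw [this, measure_compl hmeas (measure_ne_top _ _), hsupp, measure_univ]
      simp
    simp only [Finset.prod_empty, mul_one]
    rw [hset]
    calc (∑ v ∈ Finset.piAntidiag Finset.univ J',
            (Nat.multinomial Finset.univ v : ℝ) * ∫ g, ∏ k, g k ^ v k ∂μg)
        = ∑ v ∈ Finset.piAntidiag Finset.univ J',
            ∫ g, (Nat.multinomial Finset.univ v : ℝ) * ∏ k, g k ^ v k ∂μg := by
          exact Finset.sum_congr rfl fun v _ => (integral_const_mul _ _).symm
      _ = ∫ g, ∑ v ∈ Finset.piAntidiag Finset.univ J',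
            (Nat.multinomial Finset.univ v : ℝ) * ∏ k, g k ^ v k ∂μg := by
          refine (integral_finset_sum _ fun v hv => ?_).symm
          have hv' : ∑ k, v k = J' := ((Finset.mem_piAntidiag).1 hv).1
          have := integrable_h hint (fun _ _ => (0:ℝ)) v ∅
            (by rw [Finset.card_empty, hv']; omega) (μg := μg)
          simpa using this.const_mul ((Nat.multinomial Finset.univ v : ℝ))
      _ = ∫ g, (1 : ℝ) ∂μg := by
          refine integral_congr_ae ?_
          filter_upwards [hae] with g hg
          rw [← Finset.sum_pow_eq_sum_piAntidiag, hg, one_pow]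
      _ = 1 := by simp
end

section
/- Let Q ⊆ Ω be a K-dimensional linear subspace and let μ be a Borel probability measure on Ω whose support is contained in Q ∩ 𝕊^L. Define the complete matrix N with rows indexed by pairs (j,l) (j ∈ {1,…,J}, l ∈ {1,…,L_j}) and columns indexed by partial outcomes (S,ℓ) with S ⊊ {1,…,J}, by N_{(j,l),(S,ℓ)} = ∫ β_{jl} · ∏_{j'∈S} β_{j',ℓ_{j'}} dμ(β). Then: (a) N is a completion of the moment matrix of the data {M_ℓ(μ)}, i.e., N_{(j,l),(S,ℓ)} = M_{ℓ∪(j↦l)}(μ) whenever j ∉ S; and (b) the rank of N is at most K. In particular, the moment matrix of {M_ℓ(μ)} admits a completion of rank at most K. -/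
open MeasureTheory

/-- Theorem `Main2`. Let `Q` be a `K`-dimensional subspace of `Ω`
and `μ` a probability measure supported in `Q ∩ 𝕊^L`. The complete matrix `N` with
rows indexed by pairs `(j,l)` and columns indexed by partial outcomes `(S,ℓ)` with
`S ⊊ [1..J]`, defined by `N_{(j,l),(S,ℓ)} = ∫ β_{jl} ∏_{j'∈S} β_{j',ℓ_{j'}} dμ`, is a
completion of the moment matrix of `{M_ℓ(μ)}` and has rank at most `K`. -/
theorem stmt11 (J K : ℕ) (hJ : 0 < J) (hK : 0 < K) (L : Fin J → ℕ) (hL : ∀ j, 0 < L j)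
    (Q : Submodule ℝ ((j : Fin J) → Fin (L j) → ℝ))
    (hQ : Module.finrank ℝ Q = K)
    (μ : Measure ((j : Fin J) → Fin (L j) → ℝ)) [IsProbabilityMeasure μ]
    (hsupp : μ {β | β ∈ Q ∧ (∀ j l, 0 ≤ β j l) ∧ ∀ j, ∑ l, β j l = 1} = 1)
    (N : Matrix ((j : Fin J) × Fin (L j))
        ({S : Finset (Fin J) // S ≠ Finset.univ} × ((j : Fin J) → Fin (L j))) ℝ)
    (hN : ∀ r c, N r c = ∫ β, β r.1 r.2 * ∏ j ∈ c.1.1, β j (c.2 j) ∂μ) :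
    (∀ (j : Fin J) (l : Fin (L j)) (S : {S : Finset (Fin J) // S ≠ Finset.univ})
        (ℓ : (j : Fin J) → Fin (L j)), j ∉ S.1 →
        N ⟨j, l⟩ (S, ℓ) =
          ∫ β, ∏ j' ∈ insert j S.1, β j' (Function.update ℓ j l j') ∂μ) ∧
      N.rank ≤ K := by
  set Ω := (j : Fin J) → Fin (L j) → ℝ with hΩ
  -- Part (a)
  have parta : ∀ (j : Fin J) (l : Fin (L j)) (S : {S : Finset (Fin J) // S ≠ Finset.univ})
      (ℓ : (j : Fin J) → Fin (L j)), j ∉ S.1 →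
      N ⟨j, l⟩ (S, ℓ) =
        ∫ β, ∏ j' ∈ insert j S.1, β j' (Function.update ℓ j l j') ∂μ := by
    intro j l S ℓ hj
    rw [hN]
    congr 1
    funext β
    rw [Finset.prod_insert hj, Function.update_self]
    congr 1
    refine Finset.prod_congr rfl fun j' hj' => ?_
    rw [Function.update_of_ne (by rintro rfl; exact hj hj')]
  refine ⟨parta, ?_⟩
  -- a.e. membership in the support set
  have hQc : IsClosed (Q : Set Ω) := Submodule.closed_of_finiteDimensional Q
  have hSmeas : MeasurableSet {β : Ω | β ∈ Q ∧ (∀ j l, 0 ≤ β j l) ∧ ∀ j, ∑ l, β j l = 1} := by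
    apply IsClosed.measurableSet
    apply hQc.inter
    apply IsClosed.inter
    · show IsClosed {β : Ω | ∀ j l, 0 ≤ β j l}
      have : {β : Ω | ∀ j l, 0 ≤ β j l} = ⋂ j, ⋂ l, {β : Ω | 0 ≤ β j l} := by
        ext β; simp
      rw [this]
      exact isClosed_iInter fun j => isClosed_iInter fun l =>
        isClosed_le continuous_const (by fun_prop)
    · show IsClosed {β : Ω | ∀ j, ∑ l, β j l = 1}
      have : {β : Ω | ∀ j, ∑ l, β j l = 1} = ⋂ j, {β : Ω | ∑ l, β j l = 1} := by
        ext β; simp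
      rw [this]
      exact isClosed_iInter fun j => isClosed_eq (by fun_prop) continuous_const
  have hae : ∀ᵐ β ∂μ, β ∈ Q ∧ (∀ j l, 0 ≤ β j l) ∧ ∀ j, ∑ l, β j l = 1 := by
    rw [MeasureTheory.ae_iff]
    have : {β : Ω | ¬ (β ∈ Q ∧ (∀ j l, 0 ≤ β j l) ∧ ∀ j, ∑ l, β j l = 1)}
        = {β : Ω | β ∈ Q ∧ (∀ j l, 0 ≤ β j l) ∧ ∀ j, ∑ l, β j l = 1}ᶜ := rfl
    rw [this, prob_compl_eq_zero_iff hSmeas]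
    exact hsupp
  -- each coordinate of a member of the support set lies in [0,1]
  have hcoord : ∀ β : Ω, ((∀ j l, 0 ≤ β j l) ∧ ∀ j, ∑ l, β j l = 1) →
      ∀ j l, β j l ∈ Set.Icc (0:ℝ) 1 := by
    intro β hβ j l
    refine ⟨hβ.1 j l, ?_⟩
    calc β j l ≤ ∑ l', β j l' := Finset.single_le_sum (fun l' _ => hβ.1 j l') (Finset.mem_univ l)
    _ = 1 := hβ.2 j
  -- Part (b)
  classical
  -- the coordinate-flattening linear map
  set e : Ω →ₗ[ℝ] ((j : Fin J) × Fin (L j)) → ℝ :=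
    LinearMap.pi (fun r => (LinearMap.proj r.2).comp (LinearMap.proj (R := ℝ)
      (φ := fun j => Fin (L j) → ℝ) r.1)) with he
  have heapp : ∀ (β : Ω) r, e β r = β r.1 r.2 := fun β r => rfl
  have key : LinearMap.range N.mulVecLin ≤ Q.map e := by
    rw [Matrix.range_mulVecLin, Submodule.span_le]
    rintro v ⟨c, rfl⟩
    -- the integrand valued in Ω
    set F : Ω → Ω := fun β => (∏ j ∈ c.1.1, β j (c.2 j)) • β with hF
    have hFc : Continuous F := by
      refine Continuous.smul (f := fun β : Ω => ∏ j ∈ c.1.1, β j (c.2 j)) (g := id) ?_ ?_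
      · exact continuous_finset_prod _ fun j _ => (continuous_apply (c.2 j)).comp
          (continuous_apply j)
      · exact continuous_id
    have hFbound : ∀ᵐ β ∂μ, ‖F β‖ ≤ 1 := by
      filter_upwards [hae] with β hβ
      have h01 := hcoord β hβ.2
      have hβn : ‖β‖ ≤ 1 := by
        rw [pi_norm_le_iff_of_nonneg zero_le_one]
        intro j
        rw [pi_norm_le_iff_of_nonneg zero_le_one]
        intro l
        rw [Real.norm_eq_abs, abs_le]
        exact ⟨by linarith [(h01 j l).1], (h01 j l).2⟩
      have hp0 : 0 ≤ ∏ j ∈ c.1.1, β j (c.2 j) :=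
        Finset.prod_nonneg fun j _ => (h01 j (c.2 j)).1
      have hp1 : ∏ j ∈ c.1.1, β j (c.2 j) ≤ 1 :=
        Finset.prod_le_one (fun j _ => (h01 j (c.2 j)).1) (fun j _ => (h01 j (c.2 j)).2)
      calc ‖F β‖ = |∏ j ∈ c.1.1, β j (c.2 j)| * ‖β‖ := norm_smul _ _
      _ ≤ 1 * 1 := by
          apply mul_le_mul _ hβn (norm_nonneg _) zero_le_one
          rwa [abs_of_nonneg hp0]
      _ = 1 := by norm_num
    have hFint : Integrable F μ :=
      Integrable.mono' (integrable_const 1) hFc.aestronglyMeasurable hFbound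
    set β₀ : Ω := ∫ β, F β ∂μ with hβ₀
    -- β₀ ∈ Q via dual annihilator
    have hβ₀Q : β₀ ∈ Q := by
      rw [← Subspace.forall_mem_dualAnnihilator_apply_eq_zero_iff]
      intro φ hφ
      have hφc : φ β₀ = ∫ β, φ (F β) ∂μ := by
        have := (LinearMap.toContinuousLinearMap φ).integral_comp_comm hFint
        simpa using this.symm
      rw [hφc]
      rw [show (0:ℝ) = ∫ _, (0:ℝ) ∂μ by simp]
      apply integral_congr_ae
      filter_upwards [hae] with β hβ
      have : φ β = 0 := (Submodule.mem_dualAnnihilator φ).mp hφ β hβ.1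
      simp [hF, this]
    refine ⟨β₀, hβ₀Q, ?_⟩
    funext r
    -- evaluate coordinate r of the Bochner integral
    have hev : e β₀ r = ∫ β, F β r.1 r.2 ∂μ := by
      have := (LinearMap.toContinuousLinearMap ((LinearMap.proj r).comp e)).integral_comp_comm
        hFint
      simp only [LinearMap.coe_toContinuousLinearMap'] at this
      exact this.symm
    rw [hev]
    rw [Matrix.col_apply, hN]
    congr 1
    funext β
    show ((∏ j ∈ c.1.1, β j (c.2 j)) • β) r.1 r.2 = _
    rw [Pi.smul_apply, Pi.smul_apply, smul_eq_mul, mul_comm]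
  calc N.rank = Module.finrank ℝ (LinearMap.range N.mulVecLin) := rfl
  _ ≤ Module.finrank ℝ (Q.map e) := Submodule.finrank_mono key
  _ ≤ Module.finrank ℝ Q := Submodule.finrank_map_le e Q
  _ = K := hQ
end

section
/- Let Q ⊆ Ω be a K-dimensional linear subspace and let μ be a Borel probability measure on Ω whose support is contained in Q ∩ 𝕊^L. Let r ≥ K+1, let (j_1,l_1),…,(j_r,l_r) be pairs with l_i ∈ {1,…,L_{j_i}}, and let (S_1,ℓ^1),…,(S_r,ℓ^r) be partial outcomes with S_{i'} ⊊ {1,…,J} such that j_i ∉ S_{i'} for all i,i' ∈ {1,…,r}. Then the r×r matrix with entries M_{ℓ^{i'}∪(j_i↦l_i)}(μ) (row i, column i') is singular, i.e., its determinant is zero. (Equivalently: the rank of the incomplete moment matrix, defined as the maximal size of a nonzero minor consisting only of defined entries, is at most K.) -/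
open MeasureTheory

/-- corollary to Theorem `Main2`. Under (G1)+(G2), every `r×r`
minor of the (incomplete) moment matrix consisting only of defined entries, with
`r ≥ K+1`, vanishes: for pairs `(j_i,l_i)` and partial outcomes `(S_{i'},ℓ^{i'})`
with `S_{i'} ⊊ [1..J]` and `j_i ∉ S_{i'}` for all `i,i'`, the matrix with entries
`M_{ℓ^{i'}∪(j_i↦l_i)}(μ)` is singular. -/
theorem stmt12 (J K : ℕ) (hJ : 0 < J) (hK : 0 < K) (L : Fin J → ℕ) (hL : ∀ j, 0 < L j)
    (Q : Submodule ℝ ((j : Fin J) → Fin (L j) → ℝ))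
    (hQ : Module.finrank ℝ Q = K)
    (μ : Measure ((j : Fin J) → Fin (L j) → ℝ)) [IsProbabilityMeasure μ]
    (hsupp : μ {β | β ∈ Q ∧ (∀ j l, 0 ≤ β j l) ∧ ∀ j, ∑ l, β j l = 1} = 1)
    (r : ℕ) (hr : K + 1 ≤ r)
    (j : Fin r → Fin J) (l : (i : Fin r) → Fin (L (j i)))
    (S : Fin r → Finset (Fin J)) (hS : ∀ i', S i' ≠ Finset.univ)
    (ℓ : Fin r → (j' : Fin J) → Fin (L j'))
    (hjS : ∀ i i', j i ∉ S i') :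
    Matrix.det (Matrix.of fun i i' : Fin r =>
      ∫ β, ∏ j' ∈ insert (j i) (S i'),
        β j' (Function.update (ℓ i') (j i) (l i) j') ∂μ) = 0 := by
  classical
  set E := (j : Fin J) → Fin (L j) → ℝ with hE
  -- the evaluation functionals on Q
  let ψ : Fin r → (Q →ₗ[ℝ] ℝ) := fun i =>
    (LinearMap.proj (l i)).comp ((LinearMap.proj (j i)).comp Q.subtype)
  have hfd : Module.finrank ℝ (Q →ₗ[ℝ] ℝ) = K := by
    rw [Module.finrank_linearMap, hQ, Module.finrank_self, mul_one]
  have hnotLI : ¬ LinearIndependent ℝ ψ := by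
    intro h
    have h2 := h.fintype_card_le_finrank
    rw [hfd, Fintype.card_fin] at h2
    omega
  obtain ⟨g, hgsum, i₀, hgi₀⟩ := Fintype.not_linearIndependent_iff.mp hnotLI
  -- a.e. membership in the support set
  have hAmeas : MeasurableSet {β : E | β ∈ Q ∧ (∀ j l, 0 ≤ β j l) ∧ ∀ j, ∑ l, β j l = 1} := by
    refine MeasurableSet.inter ?_ (MeasurableSet.inter ?_ ?_)
    · exact (Submodule.closed_of_finiteDimensional Q).measurableSet
    · show MeasurableSet {β : E | ∀ j l, 0 ≤ β j l}
      rw [show {β : E | ∀ j l, 0 ≤ β j l} = ⋂ j, ⋂ l, {β : E | 0 ≤ β j l} by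
        ext; simp [Set.mem_iInter]]
      refine MeasurableSet.iInter fun j'' => MeasurableSet.iInter fun l'' => ?_
      exact measurableSet_le measurable_const
        ((measurable_pi_apply l'').comp (measurable_pi_apply j''))
    · show MeasurableSet {β : E | ∀ j, ∑ l, β j l = 1}
      rw [show {β : E | ∀ j, ∑ l, β j l = 1} = ⋂ j, {β : E | ∑ l, β j l = 1} by
        ext; simp [Set.mem_iInter]]
      refine MeasurableSet.iInter fun j'' => ?_
      exact measurableSet_eq_fun
        (Finset.measurable_sum _ fun l'' _ =>
          (measurable_pi_apply l'').comp (measurable_pi_apply j''))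
        measurable_const
  have hae : ∀ᵐ β ∂μ, β ∈ Q ∧ (∀ j l, 0 ≤ β j l) ∧ ∀ j, ∑ l, β j l = 1 := by
    rw [ae_iff]
    have : {β : E | ¬(β ∈ Q ∧ (∀ j l, 0 ≤ β j l) ∧ ∀ j, ∑ l, β j l = 1)}
        = {β : E | β ∈ Q ∧ (∀ j l, 0 ≤ β j l) ∧ ∀ j, ∑ l, β j l = 1}ᶜ := rfl
    rw [this, measure_compl hAmeas (measure_ne_top μ _), hsupp, measure_univ]
    simp
  -- rewrite the entries
  have hM : ∀ i i', (∫ β, ∏ j' ∈ insert (j i) (S i'),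
        β j' (Function.update (ℓ i') (j i) (l i) j') ∂μ)
      = ∫ β, β (j i) (l i) * ∏ j' ∈ S i', β j' (ℓ i' j') ∂μ := by
    intro i i'
    refine integral_congr_ae (Filter.Eventually.of_forall fun β => ?_)
    simp only [Finset.prod_insert (hjS i i'), Function.update_self]
    congr 1
    refine Finset.prod_congr rfl fun j' hj' => ?_
    rw [Function.update_of_ne (by rintro rfl; exact hjS i i' hj')]
  -- integrability
  have hint : ∀ i i',
      Integrable (fun β : E => β (j i) (l i) * ∏ j' ∈ S i', β j' (ℓ i' j')) μ := by
    intro i i'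
    have hmeas : Measurable fun β : E => β (j i) (l i) * ∏ j' ∈ S i', β j' (ℓ i' j') := by
      refine Measurable.mul ((measurable_pi_apply _).comp (measurable_pi_apply _)) ?_
      exact Finset.measurable_prod _ fun j' _ =>
        (measurable_pi_apply _).comp (measurable_pi_apply _)
    refine (integrable_const (1:ℝ)).mono' hmeas.aestronglyMeasurable ?_
    filter_upwards [hae] with β hβ
    obtain ⟨hQβ, hpos, hsum⟩ := hβ
    have hb : ∀ (j'' : Fin J) (l'' : Fin (L j'')), β j'' l'' ≤ 1 := by
      intro j'' l''
      calc β j'' l'' ≤ ∑ m, β j'' m :=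
            Finset.single_le_sum (fun m _ => hpos j'' m) (Finset.mem_univ l'')
        _ = 1 := hsum _
    rw [Real.norm_eq_abs, abs_of_nonneg
      (mul_nonneg (hpos _ _) (Finset.prod_nonneg fun _ _ => hpos _ _))]
    calc β (j i) (l i) * ∏ j' ∈ S i', β j' (ℓ i' j') ≤ 1 * 1 := by
          refine mul_le_mul (hb _ _) ?_
            (Finset.prod_nonneg fun _ _ => hpos _ _) zero_le_one
          exact Finset.prod_le_one (fun _ _ => hpos _ _) fun _ _ => hb _ _
      _ = 1 := mul_one 1
  -- each column combination vanishes
  have hcol : ∀ i', ∑ i, g i *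
      (∫ β, β (j i) (l i) * ∏ j' ∈ S i', β j' (ℓ i' j') ∂μ) = 0 := by
    intro i'
    have hstep : ∑ i, g i * (∫ β, β (j i) (l i) * ∏ j' ∈ S i', β j' (ℓ i' j') ∂μ)
        = ∫ β, ∑ i, g i * (β (j i) (l i) * ∏ j' ∈ S i', β j' (ℓ i' j')) ∂μ := by
      rw [integral_finset_sum _ fun i _ => (hint i i').const_mul (g i)]
      exact Finset.sum_congr rfl fun i _ => (integral_const_mul _ _).symm
    rw [hstep]
    refine integral_eq_zero_of_ae ?_
    filter_upwards [hae] with β hβ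
    have hz : ∑ i, g i * β (j i) (l i) = 0 := by
      have h := LinearMap.congr_fun hgsum ⟨β, hβ.1⟩
      simpa [ψ, smul_eq_mul] using h
    calc ∑ i, g i * (β (j i) (l i) * ∏ j' ∈ S i', β j' (ℓ i' j'))
        = (∑ i, g i * β (j i) (l i)) * ∏ j' ∈ S i', β j' (ℓ i' j') := by
          rw [Finset.sum_mul]
          exact Finset.sum_congr rfl fun i _ => (mul_assoc _ _ _).symm
      _ = 0 := by rw [hz, zero_mul]
  -- conclude singularity via the transpose
  have hdetT : Matrix.det (Matrix.transpose (Matrix.of fun i i' : Fin r =>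
      ∫ β, ∏ j' ∈ insert (j i) (S i'),
        β j' (Function.update (ℓ i') (j i) (l i) j') ∂μ)) = 0 := by
    rw [← Matrix.exists_mulVec_eq_zero_iff]
    refine ⟨g, fun h => hgi₀ (congrFun h i₀), ?_⟩
    funext i'
    show ∑ i, (∫ β, ∏ j' ∈ insert (j i) (S i'),
        β j' (Function.update (ℓ i') (j i) (l i) j') ∂μ) * g i = 0
    calc ∑ i, (∫ β, ∏ j' ∈ insert (j i) (S i'),
          β j' (Function.update (ℓ i') (j i) (l i) j') ∂μ) * g i
        = ∑ i, g i * (∫ β, β (j i) (l i) * ∏ j' ∈ S i', β j' (ℓ i' j') ∂μ) := by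
          refine Finset.sum_congr rfl fun i _ => ?_
          rw [mul_comm, hM i i']
      _ = 0 := hcol i'
  rw [← Matrix.det_transpose]
  exact hdetT
end

section
/- Let (α^1,…,α^K, h) be a solution of the system (MainEqSys) with data {M_ℓ}, and let A be an invertible K×K real matrix each of whose columns sums to 1. Define α'^k = Σ_{k'=1}^K A_{k'k} α^{k'}, and for every partial outcome (S,ℓ) and v ∈ ℕ^K with |v| + |S| ≤ J define h'^v_ℓ = (1/C_v) · Σ_{w} Σ_{w'} (∏_{i=1}^{|v|} (A^{-1})_{w_i, w'_i}) · h^{v(w')}_ℓ, where w ranges over tuples in {1,…,K}^{|v|} whose occurrence-count vector v(w) equals v, w' ranges over all tuples in {1,…,K}^{|v|}, and C_v = |v|!/(v_1!⋯v_K!). Then (α'^1,…,α'^K, h') is also a solution of (MainEqSys) with the same data {M_ℓ}. -/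
/-- The occurrence-count vector `v(w) ∈ ℕ^K` of a tuple `w ∈ {1,…,K}^m`:
its `k`-th component is the number of entries of `w` equal to `k`. -/
def vOf {K m : ℕ} (w : Fin m → Fin K) : Fin K → ℕ :=
  fun k => (Finset.univ.filter fun i => w i = k).card

section Aux
open Finset

lemma aux_sum_vOf {K m : ℕ} (w : Fin m → Fin K) : ∑ k, vOf w k = m := by
  have := Finset.card_eq_sum_card_fiberwise (f := w) (s := univ) (t := univ)
    (fun x _ => mem_univ _)
  simpa [vOf] using this.symm

lemma aux_vOf_comp {K m n : ℕ} (w : Fin m → Fin K) (e : Fin n ≃ Fin m) :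
    vOf (w ∘ e) = vOf w := by
  funext k
  show (univ.filter fun i => w (e i) = k).card = (univ.filter fun i => w i = k).card
  rw [← Fintype.card_subtype, ← Fintype.card_subtype]
  exact Fintype.card_congr (e.subtypeEquiv fun _ => Iff.rfl)

lemma aux_vOf_cons {K m : ℕ} (a : Fin K) (w : Fin m → Fin K) :
    vOf (Fin.cons a w) = vOf w + Pi.single a 1 := by
  funext k
  simp only [vOf, Pi.add_apply, Pi.single_apply, Finset.card_filter, Fin.sum_univ_succ,
    Fin.cons_zero, Fin.cons_succ]
  rw [add_comm]
  congr 1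
  simp [eq_comm]

lemma aux_exists_rep {K : ℕ} : ∀ (m : ℕ) (v : Fin K → ℕ), ∑ k, v k = m →
    ∃ w : Fin m → Fin K, vOf w = v := by
  intro m
  induction m with
  | zero =>
    intro v hv
    refine ⟨fun i => i.elim0, funext fun k => ?_⟩
    have : v k = 0 := by
      refine Finset.sum_eq_zero_iff.1 hv k (mem_univ k)
    simp [vOf, this]
  | succ m IH =>
    intro v hv
    obtain ⟨a, -, ha⟩ : ∃ a ∈ univ, v a ≠ 0 := by
      apply Finset.exists_ne_zero_of_sum_ne_zero
      omega
    set v' := v - Pi.single a 1 with hv'def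
    have hrestore : v' + Pi.single a 1 = v := by
      funext k
      rcases eq_or_ne k a with rfl | hk
      · simp [hv'def]; omega
      · simp [hv'def, Pi.single_apply, hk]
    have hsum' : ∑ k, v' k = m := by
      have h1 : ∑ k, v k = (∑ k, v' k) + 1 := by
        rw [← hrestore]
        simp [Finset.sum_add_distrib, Finset.sum_pi_single']
      omega
    obtain ⟨w', hw'⟩ := IH v' hsum'
    exact ⟨Fin.cons a w', by rw [aux_vOf_cons, hw', hrestore]⟩

lemma aux_fiber_empty {K m : ℕ} {v : Fin K → ℕ} (hv : ∑ k, v k ≠ m) :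
    (univ.filter fun w : Fin m → Fin K => vOf w = v) = ∅ := by
  rw [Finset.filter_eq_empty_iff]
  intro w _ hw
  exact hv (by rw [← hw, aux_sum_vOf])

lemma aux_add_single_eq_iff {K : ℕ} {f v : Fin K → ℕ} {a : Fin K} :
    f + Pi.single a 1 = v ↔ (v a ≠ 0 ∧ f = v - Pi.single a 1) := by
  constructor
  · rintro rfl
    refine ⟨by simp, funext fun k => ?_⟩
    rcases eq_or_ne k a with rfl | hk
    · simp
    · simp [Pi.single_apply, hk]
  · rintro ⟨ha, rfl⟩
    funext k
    rcases eq_or_ne k a with rfl | hk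
    · simp; omega
    · simp [Pi.single_apply, hk]

lemma aux_key_card {K : ℕ} : ∀ (m : ℕ) (v : Fin K → ℕ), ∑ k, v k = m →
    (univ.filter fun w : Fin m → Fin K => vOf w = v).card * ∏ k, (v k).factorial
      = m.factorial := by
  intro m
  induction m with
  | zero =>
    intro v hv
    have hv0 : ∀ k, v k = 0 := fun k => Finset.sum_eq_zero_iff.1 hv k (mem_univ k)
    have : (univ.filter fun w : Fin 0 → Fin K => vOf w = v) = univ := by
      refine Finset.filter_true_of_mem fun w _ => funext fun k => ?_
      simp [vOf, hv0 k]
    rw [this]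
    simp [hv0, Finset.card_univ]
  | succ m IH =>
    intro v hv
    have stepA : (univ.filter fun w : Fin (m+1) → Fin K => vOf w = v).card
        = ∑ a : Fin K,
            (univ.filter fun u : Fin m → Fin K => vOf u = v - Pi.single a 1).card := by
      rw [Finset.card_eq_sum_card_fiberwise
        (f := fun w : Fin (m+1) → Fin K => w 0) (t := univ) (fun x _ => mem_univ _)]
      refine Finset.sum_congr rfl fun a _ => ?_
      rw [Finset.filter_filter]
      by_cases hva : v a = 0
      · have h1 : (univ.filter fun w : Fin (m+1) → Fin K => vOf w = v ∧ w 0 = a) = ∅ := by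
          rw [Finset.filter_eq_empty_iff]
          rintro w _ ⟨h1, h2⟩
          have : vOf w a = 0 := by rw [h1, hva]
          have h0 : (0 : Fin (m+1)) ∈ univ.filter fun i => w i = a :=
            Finset.mem_filter.2 ⟨mem_univ _, h2⟩
          rw [vOf] at this
          rw [Finset.card_eq_zero] at this
          rw [this] at h0
          exact absurd h0 (Finset.notMem_empty _)
        have h2 : v - Pi.single a 1 = v := by
          funext k
          rcases eq_or_ne k a with rfl | hk
          · simp [hva]
          · simp [Pi.single_apply, hk]
        rw [h1, h2, aux_fiber_empty (by omega)]
        rfl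
      · refine Finset.card_bij' (fun w _ => Fin.tail w) (fun u _ => Fin.cons a u)
          ?_ ?_ ?_ ?_
        · intro w hw
          obtain ⟨-, h1, h2⟩ := Finset.mem_filter.1 hw
          refine Finset.mem_filter.2 ⟨mem_univ _, ?_⟩
          have hcons : Fin.cons a (Fin.tail w) = w := by
            rw [← h2, Fin.cons_self_tail]
          have : vOf (Fin.tail w) + Pi.single a 1 = v := by
            rw [← aux_vOf_cons, hcons, h1]
          exact (aux_add_single_eq_iff.1 this).2
        · intro u hu
          obtain ⟨-, h1⟩ := Finset.mem_filter.1 hu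
          refine Finset.mem_filter.2 ⟨mem_univ _, ?_, ?_⟩
          · rw [aux_vOf_cons, h1]
            exact aux_add_single_eq_iff.2 ⟨hva, rfl⟩
          · simp
        · intro w hw
          obtain ⟨-, -, h2⟩ := Finset.mem_filter.1 hw
          subst h2
          exact Fin.cons_self_tail w
        · intro u _
          simp
    rw [stepA, Finset.sum_mul]
    have perA : ∀ a : Fin K,
        (univ.filter fun u : Fin m → Fin K => vOf u = v - Pi.single a 1).card
          * ∏ k, (v k).factorial = v a * m.factorial := by
      intro a
      by_cases hva : v a = 0
      · have h2 : v - Pi.single a 1 = v := by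
          funext k
          rcases eq_or_ne k a with rfl | hk
          · simp [hva]
          · simp [Pi.single_apply, hk]
        rw [h2, aux_fiber_empty (by omega), hva]
        simp
      · have hsub : ∑ k, (v - Pi.single a 1 : Fin K → ℕ) k = m := by
          have hres : (v - Pi.single a 1 : Fin K → ℕ) + Pi.single a 1 = v :=
            aux_add_single_eq_iff.2 ⟨hva, rfl⟩
          have h1 : ∑ k, v k
              = (∑ k, (v - Pi.single a 1 : Fin K → ℕ) k) + 1 := by
            rw [← hres]
            simp [Finset.sum_add_distrib, Finset.sum_pi_single']
          omega
        have hprod : ∏ k, (v k).factorial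
            = v a * ∏ k, ((v - Pi.single a 1 : Fin K → ℕ) k).factorial := by
          rw [← Finset.mul_prod_erase univ _ (mem_univ a)]
          conv_rhs => rw [← Finset.mul_prod_erase univ _ (mem_univ a)]
          have hoff : ∀ k ∈ univ.erase a,
              ((v - Pi.single a 1 : Fin K → ℕ) k).factorial = (v k).factorial := by
            intro k hk
            have := Finset.ne_of_mem_erase hk
            simp [Pi.single_apply, this]
          rw [Finset.prod_congr rfl hoff]
          have hda : (v - Pi.single a 1 : Fin K → ℕ) a = v a - 1 := by simp
          rw [hda]
          obtain ⟨n, hn⟩ := Nat.exists_eq_succ_of_ne_zero hva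
          rw [hn]
          simp [Nat.factorial_succ, mul_assoc]
        rw [hprod, ← mul_assoc, mul_comm _ (v a), mul_assoc, IH _ hsub]
    rw [Finset.sum_congr rfl fun a _ => perA a, ← Finset.sum_mul, hv,
      Nat.factorial_succ]

lemma aux_card_fiber {K : ℕ} {m : ℕ} {v : Fin K → ℕ} (hv : ∑ k, v k = m) :
    (univ.filter fun w : Fin m → Fin K => vOf w = v).card
      = Nat.multinomial univ v := by
  have h1 := aux_key_card m v hv
  have h2 := Nat.multinomial_spec univ v
  rw [hv] at h2
  have hpos : 0 < ∏ k, (v k).factorial :=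
    Finset.prod_pos fun k _ => Nat.factorial_pos _
  apply Nat.eq_of_mul_eq_mul_right hpos
  rw [h1, mul_comm (Nat.multinomial univ v) _] at *
  omega

lemma aux_exists_perm {K m : ℕ} {w₁ w₂ : Fin m → Fin K} (hv : vOf w₁ = vOf w₂) :
    ∃ σ : Equiv.Perm (Fin m), ∀ i, w₂ i = w₁ (σ i) := by
  have e : ∀ k, {i // w₂ i = k} ≃ {i // w₁ i = k} := fun k =>
    Fintype.equivOfCardEq (by
      rw [Fintype.card_subtype, Fintype.card_subtype]
      exact (congrFun hv k).symm)
  refine ⟨(Equiv.sigmaFiberEquiv w₂).symm.trans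
    ((Equiv.sigmaCongrRight e).trans (Equiv.sigmaFiberEquiv w₁)), fun i => ?_⟩
  exact ((e (w₂ i)) ⟨i, rfl⟩).2.symm

lemma aux_sum_eq_of_vOf_eq {K m : ℕ} (B : Matrix (Fin K) (Fin K) ℝ)
    (F : (Fin K → ℕ) → ℝ) {w₁ w₂ : Fin m → Fin K} (hv : vOf w₁ = vOf w₂) :
    ∑ w' : Fin m → Fin K, (∏ i, B (w₁ i) (w' i)) * F (vOf w')
      = ∑ w' : Fin m → Fin K, (∏ i, B (w₂ i) (w' i)) * F (vOf w') := by
  obtain ⟨σ, hσ⟩ := aux_exists_perm hv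
  refine Fintype.sum_equiv (Equiv.arrowCongr σ.symm (Equiv.refl (Fin K))) _ _ fun w' => ?_
  have h1 : ∀ i, (Equiv.arrowCongr σ.symm (Equiv.refl (Fin K))) w' i = w' (σ i) :=
    fun i => by simp
  congr 1
  · rw [← Equiv.prod_comp σ (fun t => B (w₁ t) (w' t))]
    refine Finset.prod_congr rfl fun i _ => ?_
    rw [h1, hσ]
  · congr 1
    have h2 : (Equiv.arrowCongr σ.symm (Equiv.refl (Fin K))) w' = w' ∘ σ := funext h1
    rw [h2, aux_vOf_comp]

lemma aux_repr {K : ℕ} (B : Matrix (Fin K) (Fin K) ℝ) (F : (Fin K → ℕ) → ℝ)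
    (v : Fin K → ℕ) (m : ℕ) (hv : ∑ k, v k = m)
    (w₀ : Fin m → Fin K) (h₀ : vOf w₀ = v) :
    ((Nat.multinomial Finset.univ v : ℝ)⁻¹ *
      ∑ w ∈ Finset.univ.filter (fun w : Fin (∑ k, v k) → Fin K => vOf w = v),
        ∑ w' : Fin (∑ k, v k) → Fin K, (∏ i, B (w i) (w' i)) * F (vOf w'))
      = ∑ w' : Fin m → Fin K, (∏ i, B (w₀ i) (w' i)) * F (vOf w') := by
  subst hv
  rw [Finset.sum_congr rfl (fun w hw => aux_sum_eq_of_vOf_eq B F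
    (w₁ := w) (w₂ := w₀) (by rw [h₀, (Finset.mem_filter.1 hw).2])),
    Finset.sum_const, aux_card_fiber rfl, nsmul_eq_mul, inv_mul_cancel_left₀]
  exact Nat.cast_ne_zero.2 (Nat.multinomial_pos _ _).ne'

lemma aux_algebra {K : ℕ} {I : Type*} [Fintype I] (A Ainv : Matrix (Fin K) (Fin K) ℝ)
    (hAinv : A * Ainv = 1) (al : Fin K → ℝ) (P : I → ℝ) (T : I → Fin K → ℝ) :
    ∑ k, (∑ k', A k' k * al k') * (∑ b, ∑ u, (Ainv k b * P u) * T u b)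
      = ∑ u, P u * ∑ b, al b * T u b := by
  have hscal : ∀ b, ∑ k, (∑ k', A k' k * al k') * Ainv k b = al b := by
    intro b
    calc ∑ k, (∑ k', A k' k * al k') * Ainv k b
        = ∑ k, ∑ k', al k' * (A k' k * Ainv k b) := by
          refine Finset.sum_congr rfl fun k _ => ?_
          rw [Finset.sum_mul]
          exact Finset.sum_congr rfl fun k' _ => by ring
      _ = ∑ k', ∑ k, al k' * (A k' k * Ainv k b) := Finset.sum_comm
      _ = ∑ k', al k' * (A * Ainv) k' b := by
          refine Finset.sum_congr rfl fun k' _ => ?_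
          rw [← Finset.mul_sum, Matrix.mul_apply]
      _ = al b := by rw [hAinv]; simp [Matrix.one_apply]
  calc ∑ k, (∑ k', A k' k * al k') * (∑ b, ∑ u, (Ainv k b * P u) * T u b)
      = ∑ k, ∑ b, ∑ u, ((∑ k', A k' k * al k') * Ainv k b) * (P u * T u b) := by
        refine Finset.sum_congr rfl fun k _ => ?_
        rw [Finset.mul_sum]
        refine Finset.sum_congr rfl fun b _ => ?_
        rw [Finset.mul_sum]
        exact Finset.sum_congr rfl fun u _ => by ring
    _ = ∑ b, ∑ u, ∑ k, ((∑ k', A k' k * al k') * Ainv k b) * (P u * T u b) := by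
        rw [Finset.sum_comm]
        exact Finset.sum_congr rfl fun b _ => Finset.sum_comm
    _ = ∑ b, ∑ u, al b * (P u * T u b) := by
        refine Finset.sum_congr rfl fun b _ => Finset.sum_congr rfl fun u _ => ?_
        rw [← Finset.sum_mul, hscal b]
    _ = ∑ u, P u * ∑ b, al b * T u b := by
        rw [Finset.sum_comm]
        refine Finset.sum_congr rfl fun u _ => ?_
        rw [Finset.mul_sum]
        exact Finset.sum_congr rfl fun b _ => by ring

lemma aux_split {K m : ℕ} (f : Fin K → (Fin m → Fin K) → ℝ) :
    ∑ w' : Fin (m+1) → Fin K, f (w' 0) (Fin.tail w') = ∑ b, ∑ u, f b u :=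
  (Fintype.sum_equiv ((Fin.consEquiv fun _ : Fin (m+1) => Fin K).symm) _
    (fun p => f p.1 p.2) (fun w' => rfl)).trans (Fintype.sum_prod_type _)

set_option maxHeartbeats 2000000 in
lemma clause2 (J K : ℕ) (L : Fin J → ℕ)
    (α : Fin K → (j : Fin J) → Fin (L j) → ℝ)
    (h : (Fin K → ℕ) → Finset (Fin J) → ((j : Fin J) → Fin (L j)) → ℝ)
    (A : Matrix (Fin K) (Fin K) ℝ)
    (hAinv : A * A⁻¹ = 1)
    (hi : ∀ (v : Fin K → ℕ) (S : Finset (Fin J)) (ℓ : (j : Fin J) → Fin (L j))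
      (j : Fin J) (l : Fin (L j)),
      (∑ k, v k) + S.card + 1 ≤ J → j ∉ S →
      (∑ k, α k j l * h (v + Pi.single k 1) S ℓ) =
        h v (insert j S) (Function.update ℓ j l))
    (v : Fin K → ℕ) (S : Finset (Fin J)) (ℓ : (j : Fin J) → Fin (L j))
    (j : Fin J) (l : Fin (L j))
    (hle : (∑ k, v k) + S.card + 1 ≤ J) (hj : j ∉ S) :
    ∑ k, (∑ k', A k' k * α k' j l) *
        ((Nat.multinomial Finset.univ (v + Pi.single k 1) : ℝ)⁻¹ *
          ∑ w ∈ Finset.univ.filter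
            (fun w : Fin (∑ k', (v + Pi.single k 1 : Fin K → ℕ) k') → Fin K =>
              vOf w = v + Pi.single k 1),
            ∑ w' : Fin (∑ k', (v + Pi.single k 1 : Fin K → ℕ) k') → Fin K,
              (∏ i, A⁻¹ (w i) (w' i)) * h (vOf w') S ℓ)
      = (Nat.multinomial Finset.univ v : ℝ)⁻¹ *
          ∑ w ∈ Finset.univ.filter (fun w : Fin (∑ k, v k) → Fin K => vOf w = v),
            ∑ w' : Fin (∑ k, v k) → Fin K,
              (∏ i, A⁻¹ (w i) (w' i)) *
                h (vOf w') (insert j S) (Function.update ℓ j l) := by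
  obtain ⟨w₀, hw₀⟩ := aux_exists_rep (∑ k, v k) v rfl
  have hR := aux_repr A⁻¹ (fun u => h u (insert j S) (Function.update ℓ j l))
    v (∑ k, v k) rfl w₀ hw₀
  beta_reduce at hR
  have hsum1 : ∀ k : Fin K, ∑ k', (v + Pi.single k 1 : Fin K → ℕ) k' = (∑ k'', v k'') + 1 := by
    intro k
    simp [Finset.sum_add_distrib, Finset.sum_pi_single']
  have hLk : ∀ k : Fin K,
      ((Nat.multinomial Finset.univ (v + Pi.single k 1) : ℝ)⁻¹ *
        ∑ w ∈ Finset.univ.filter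
          (fun w : Fin (∑ k', (v + Pi.single k 1 : Fin K → ℕ) k') → Fin K =>
            vOf w = v + Pi.single k 1),
          ∑ w' : Fin (∑ k', (v + Pi.single k 1 : Fin K → ℕ) k') → Fin K,
            (∏ i, A⁻¹ (w i) (w' i)) * h (vOf w') S ℓ)
      = ∑ b : Fin K, ∑ u : Fin (∑ k'', v k'') → Fin K,
          (A⁻¹ k b * ∏ i, A⁻¹ (w₀ i) (u i)) * h (vOf u + Pi.single b 1) S ℓ := by
    intro k
    have hcons : vOf (Fin.cons k w₀) = v + Pi.single k 1 := by
      rw [aux_vOf_cons, hw₀]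
    have hrep := aux_repr A⁻¹ (fun u => h u S ℓ) (v + Pi.single k 1)
      ((∑ k'', v k'') + 1) (hsum1 k) (Fin.cons k w₀) hcons
    beta_reduce at hrep
    rw [hrep]
    have htermc : ∀ (b : Fin K) (u : Fin (∑ k'', v k'') → Fin K),
        (∏ i, A⁻¹ ((Fin.cons k w₀ : Fin ((∑ k'', v k'') + 1) → Fin K) i)
            ((Fin.cons b u : Fin ((∑ k'', v k'') + 1) → Fin K) i)) *
          h (vOf (Fin.cons b u : Fin ((∑ k'', v k'') + 1) → Fin K)) S ℓ
          = (A⁻¹ k b * ∏ i, A⁻¹ (w₀ i) (u i)) * h (vOf u + Pi.single b 1) S ℓ := by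
      intro b u
      rw [Fin.prod_univ_succ]
      simp only [Fin.cons_zero, Fin.cons_succ]
      rw [aux_vOf_cons b u]
    have hterm : ∀ w' : Fin ((∑ k'', v k'') + 1) → Fin K,
        (∏ i, A⁻¹ ((Fin.cons k w₀ : Fin ((∑ k'', v k'') + 1) → Fin K) i) (w' i)) *
            h (vOf w') S ℓ
          = (A⁻¹ k (w' 0) * ∏ i, A⁻¹ (w₀ i) (Fin.tail w' i)) *
              h (vOf (Fin.tail w') + Pi.single (w' 0) 1) S ℓ := by
      intro w'
      have := htermc (w' 0) (Fin.tail w')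
      rwa [Fin.cons_self_tail] at this
    rw [Finset.sum_congr rfl (fun w' _ => hterm w')]
    exact aux_split (fun b u =>
      (A⁻¹ k b * ∏ i, A⁻¹ (w₀ i) (u i)) * h (vOf u + Pi.single b 1) S ℓ)
  calc ∑ k, (∑ k', A k' k * α k' j l) *
        ((Nat.multinomial Finset.univ (v + Pi.single k 1) : ℝ)⁻¹ *
          ∑ w ∈ Finset.univ.filter
            (fun w : Fin (∑ k', (v + Pi.single k 1 : Fin K → ℕ) k') → Fin K =>
              vOf w = v + Pi.single k 1),
            ∑ w' : Fin (∑ k', (v + Pi.single k 1 : Fin K → ℕ) k') → Fin K,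
              (∏ i, A⁻¹ (w i) (w' i)) * h (vOf w') S ℓ)
      = ∑ k, (∑ k', A k' k * α k' j l) *
          (∑ b : Fin K, ∑ u : Fin (∑ k'', v k'') → Fin K,
            (A⁻¹ k b * ∏ i, A⁻¹ (w₀ i) (u i)) * h (vOf u + Pi.single b 1) S ℓ) :=
        Finset.sum_congr rfl fun k _ => by rw [hLk k]
    _ = ∑ u : Fin (∑ k'', v k'') → Fin K, (∏ i, A⁻¹ (w₀ i) (u i)) *
          ∑ b, α b j l * h (vOf u + Pi.single b 1) S ℓ :=
        aux_algebra A A⁻¹ hAinv (fun k' => α k' j l)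
          (fun u => ∏ i, A⁻¹ (w₀ i) (u i))
          (fun u b => h (vOf u + Pi.single b 1) S ℓ)
    _ = ∑ u : Fin (∑ k'', v k'') → Fin K, (∏ i, A⁻¹ (w₀ i) (u i)) *
          h (vOf u) (insert j S) (Function.update ℓ j l) := by
        refine Finset.sum_congr rfl fun u _ => ?_
        rw [hi (vOf u) S ℓ j l (by rw [aux_sum_vOf]; exact hle) hj]
    _ = (Nat.multinomial Finset.univ v : ℝ)⁻¹ *
          ∑ w ∈ Finset.univ.filter (fun w : Fin (∑ k, v k) → Fin K => vOf w = v),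
            ∑ w' : Fin (∑ k, v k) → Fin K,
              (∏ i, A⁻¹ (w i) (w' i)) *
                h (vOf w') (insert j S) (Function.update ℓ j l) := hR.symm


lemma clause3 (J K : ℕ) (L : Fin J → ℕ)
    (h : (Fin K → ℕ) → Finset (Fin J) → ((j : Fin J) → Fin (L j)) → ℝ)
    (A : Matrix (Fin K) (Fin K) ℝ)
    (hBsum : ∀ b, ∑ k, A⁻¹ k b = 1)
    (hiii : ∀ J' : ℕ, J' ≤ J → ∀ ℓ : (j : Fin J) → Fin (L j),
      ∑ v ∈ (Fintype.piFinset fun _ : Fin K => Finset.range (J' + 1)).filter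
          (fun v => ∑ k, v k = J'),
        (Nat.multinomial Finset.univ v : ℝ) * h v ∅ ℓ = 1)
    (J' : ℕ) (hJ' : J' ≤ J) (ℓ : (j : Fin J) → Fin (L j)) :
    ∑ v ∈ (Fintype.piFinset fun _ : Fin K => Finset.range (J' + 1)).filter
          (fun v => ∑ k, v k = J'),
      (Nat.multinomial Finset.univ v : ℝ) *
        ((Nat.multinomial Finset.univ v : ℝ)⁻¹ *
          ∑ w ∈ Finset.univ.filter (fun w : Fin (∑ k, v k) → Fin K => vOf w = v),
            ∑ w' : Fin (∑ k, v k) → Fin K,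
              (∏ i, A⁻¹ (w i) (w' i)) * h (vOf w') ∅ ℓ) = 1 := by
  have mapsTo : ∀ w : Fin J' → Fin K, w ∈ Finset.univ →
      vOf w ∈ (Fintype.piFinset fun _ : Fin K => Finset.range (J' + 1)).filter
        (fun v => ∑ k, v k = J') := by
    intro w _
    refine Finset.mem_filter.2 ⟨?_, aux_sum_vOf w⟩
    refine Fintype.mem_piFinset.2 fun k => Finset.mem_range.2 ?_
    have h1 : vOf w k ≤ ∑ k', vOf w k' :=
      Finset.single_le_sum (fun _ _ => Nat.zero_le _) (Finset.mem_univ k)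
    have h2 := aux_sum_vOf w
    omega
  calc ∑ v ∈ (Fintype.piFinset fun _ : Fin K => Finset.range (J' + 1)).filter
          (fun v => ∑ k, v k = J'),
        (Nat.multinomial Finset.univ v : ℝ) *
          ((Nat.multinomial Finset.univ v : ℝ)⁻¹ *
            ∑ w ∈ Finset.univ.filter (fun w : Fin (∑ k, v k) → Fin K => vOf w = v),
              ∑ w' : Fin (∑ k, v k) → Fin K,
                (∏ i, A⁻¹ (w i) (w' i)) * h (vOf w') ∅ ℓ)
      = ∑ v ∈ (Fintype.piFinset fun _ : Fin K => Finset.range (J' + 1)).filter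
          (fun v => ∑ k, v k = J'),
          ∑ w ∈ Finset.univ.filter (fun w : Fin J' → Fin K => vOf w = v),
            ∑ w' : Fin J' → Fin K,
              (∏ i, A⁻¹ (w i) (w' i)) * h (vOf w') ∅ ℓ := by
        refine Finset.sum_congr rfl fun v hv => ?_
        obtain ⟨hv1, hv2⟩ := Finset.mem_filter.1 hv
        subst hv2
        exact mul_inv_cancel_left₀
          (Nat.cast_ne_zero.2 (Nat.multinomial_pos _ _).ne') _
    _ = ∑ w : Fin J' → Fin K, ∑ w' : Fin J' → Fin K,
            (∏ i, A⁻¹ (w i) (w' i)) * h (vOf w') ∅ ℓ :=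
        Finset.sum_fiberwise_of_maps_to mapsTo _
    _ = ∑ w' : Fin J' → Fin K, h (vOf w') ∅ ℓ := by
        rw [Finset.sum_comm]
        refine Finset.sum_congr rfl fun w' _ => ?_
        rw [← Finset.sum_mul]
        have hone : (∑ w : Fin J' → Fin K, ∏ i, A⁻¹ (w i) (w' i)) = 1 := by
          have hps := Finset.prod_univ_sum (fun _ : Fin J' => (univ : Finset (Fin K)))
            (fun i c => A⁻¹ c (w' i))
          rw [← Fintype.piFinset_univ, ← hps]
          simp [hBsum]
        rw [hone, one_mul]
    _ = ∑ v ∈ (Fintype.piFinset fun _ : Fin K => Finset.range (J' + 1)).filter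
          (fun v => ∑ k, v k = J'),
          (Nat.multinomial Finset.univ v : ℝ) * h v ∅ ℓ := by
        rw [← Finset.sum_fiberwise_of_maps_to mapsTo (fun w' => h (vOf w') ∅ ℓ)]
        refine Finset.sum_congr rfl fun v hv => ?_
        obtain ⟨hv1, hv2⟩ := Finset.mem_filter.1 hv
        rw [Finset.sum_congr rfl
          (fun w hw => by rw [(Finset.mem_filter.1 hw).2] :
            ∀ w ∈ Finset.univ.filter (fun w : Fin J' → Fin K => vOf w = v),
              h (vOf w) ∅ ℓ = h v ∅ ℓ),
          Finset.sum_const, aux_card_fiber hv2, nsmul_eq_mul]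
    _ = 1 := hiii J' hJ' ℓ


end Aux

/-- If `(α,h)` solves (MainEqSys) with data `{M_ℓ}` and `A` is an
invertible `K×K` matrix each of whose columns sums to `1`, then
`α'ᵏ = Σ_{k'} A_{k'k} α^{k'}` together with
`h'^v_ℓ = C_v⁻¹ · Σ_{w : v(w)=v} Σ_{w'} (∏_i (A⁻¹)_{wᵢ,w'ᵢ}) h^{v(w')}_ℓ`
also solves (MainEqSys) with the same data. -/
theorem stmt14 (J K : ℕ) (hJ : 0 < J) (hK : 0 < K) (L : Fin J → ℕ) (hL : ∀ j, 0 < L j)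
    (M : Finset (Fin J) → ((j : Fin J) → Fin (L j)) → ℝ)
    (α : Fin K → (j : Fin J) → Fin (L j) → ℝ)
    (h : (Fin K → ℕ) → Finset (Fin J) → ((j : Fin J) → Fin (L j)) → ℝ)
    (hsol : MainEqSys J K L M α h)
    (A : Matrix (Fin K) (Fin K) ℝ) (hA : IsUnit A.det)
    (hcol : ∀ k, ∑ k', A k' k = 1) :
    MainEqSys J K L M
      (fun k j l => ∑ k', A k' k * α k' j l)
      (fun v S ℓ => (Nat.multinomial Finset.univ v : ℝ)⁻¹ *
        ∑ w ∈ Finset.univ.filter (fun w : Fin (∑ k, v k) → Fin K => vOf w = v),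
          ∑ w' : Fin (∑ k, v k) → Fin K,
            (∏ i, A⁻¹ (w i) (w' i)) * h (vOf w') S ℓ) := by
  have hAinv : A * A⁻¹ = 1 := Matrix.mul_nonsing_inv A hA
  have hBsum : ∀ b, ∑ k, A⁻¹ k b = 1 := by
    intro b
    have h1 : ∀ k, (1 : ℝ) * A⁻¹ k b = A⁻¹ k b := fun k => one_mul _
    calc ∑ k, A⁻¹ k b = ∑ k, (∑ k', A k' k) * A⁻¹ k b := by
              simp [hcol]
      _ = ∑ k, ∑ k', A k' k * A⁻¹ k b := by
              refine Finset.sum_congr rfl fun k _ => ?_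
              rw [Finset.sum_mul]
      _ = ∑ k', ∑ k, A k' k * A⁻¹ k b := Finset.sum_comm
      _ = ∑ k', (A * A⁻¹) k' b := by
              refine Finset.sum_congr rfl fun k' _ => (Matrix.mul_apply).symm
      _ = 1 := by rw [hAinv]; simp [Matrix.one_apply]
  refine ⟨?_, ?_, ?_, ?_⟩
  · -- clause 0
    intro v S ℓ ℓ' hs
    beta_reduce
    refine congrArg _ (Finset.sum_congr rfl fun w _ => Finset.sum_congr rfl fun w' _ => ?_)
    rw [hsol.1 _ S ℓ ℓ' hs]
  · -- clause (i)
    intro v S ℓ j l hle hj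
    exact clause2 J K L α h A hAinv hsol.2.1 v S ℓ j l hle hj
  · -- clause (ii)
    intro S ℓ
    beta_reduce
    have h₀ : vOf (fun i : Fin 0 => i.elim0) = (0 : Fin K → ℕ) := by
      funext k; simp [vOf]
    have hrep := aux_repr A⁻¹ (fun u => h u S ℓ) 0 0 (by simp)
      (fun i : Fin 0 => i.elim0) h₀
    beta_reduce at hrep
    rw [hrep]
    have hd : vOf (default : Fin 0 → Fin K) = (0 : Fin K → ℕ) := by
      funext k; simp [vOf]
    rw [Fintype.sum_unique]
    simp [hd, hsol.2.2.1 S ℓ]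
  · -- clause (iii)
    intro J' hJ' ℓ
    beta_reduce
    have mapsTo : ∀ w : Fin J' → Fin K, w ∈ Finset.univ →
        vOf w ∈ (Fintype.piFinset fun _ : Fin K => Finset.range (J' + 1)).filter
          (fun v => ∑ k, v k = J') := by
      intro w _
      refine Finset.mem_filter.2 ⟨?_, aux_sum_vOf w⟩
      refine Fintype.mem_piFinset.2 fun k => Finset.mem_range.2 ?_
      have h1 : vOf w k ≤ ∑ k', vOf w k' :=
        Finset.single_le_sum (fun _ _ => Nat.zero_le _) (Finset.mem_univ k)
      have h2 := aux_sum_vOf w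
      omega
    calc ∑ v ∈ (Fintype.piFinset fun _ : Fin K => Finset.range (J' + 1)).filter
            (fun v => ∑ k, v k = J'),
          (Nat.multinomial Finset.univ v : ℝ) *
            ((Nat.multinomial Finset.univ v : ℝ)⁻¹ *
              ∑ w ∈ Finset.univ.filter (fun w : Fin (∑ k, v k) → Fin K => vOf w = v),
                ∑ w' : Fin (∑ k, v k) → Fin K,
                  (∏ i, A⁻¹ (w i) (w' i)) * h (vOf w') ∅ ℓ)
        = ∑ v ∈ (Fintype.piFinset fun _ : Fin K => Finset.range (J' + 1)).filter
            (fun v => ∑ k, v k = J'),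
            ∑ w ∈ Finset.univ.filter (fun w : Fin J' → Fin K => vOf w = v),
              ∑ w' : Fin J' → Fin K,
                (∏ i, A⁻¹ (w i) (w' i)) * h (vOf w') ∅ ℓ := by
          refine Finset.sum_congr rfl fun v hv => ?_
          obtain ⟨hv1, hv2⟩ := Finset.mem_filter.1 hv
          subst hv2
          exact mul_inv_cancel_left₀
            (Nat.cast_ne_zero.2 (Nat.multinomial_pos _ _).ne') _
      _ = ∑ w : Fin J' → Fin K, ∑ w' : Fin J' → Fin K,
              (∏ i, A⁻¹ (w i) (w' i)) * h (vOf w') ∅ ℓ :=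
          Finset.sum_fiberwise_of_maps_to mapsTo _
      _ = ∑ w' : Fin J' → Fin K, h (vOf w') ∅ ℓ := by
          rw [Finset.sum_comm]
          refine Finset.sum_congr rfl fun w' _ => ?_
          rw [← Finset.sum_mul]
          have hone : (∑ w : Fin J' → Fin K, ∏ i, A⁻¹ (w i) (w' i)) = 1 := by
            have hps := Finset.prod_univ_sum
              (fun _ : Fin J' => (Finset.univ : Finset (Fin K)))
              (fun i c => A⁻¹ c (w' i))
            rw [← Fintype.piFinset_univ, ← hps]
            simp [hBsum]
          rw [hone, one_mul]
      _ = ∑ v ∈ (Fintype.piFinset fun _ : Fin K => Finset.range (J' + 1)).filter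
            (fun v => ∑ k, v k = J'),
            (Nat.multinomial Finset.univ v : ℝ) * h v ∅ ℓ := by
          rw [← Finset.sum_fiberwise_of_maps_to mapsTo (fun w' => h (vOf w') ∅ ℓ)]
          refine Finset.sum_congr rfl fun v hv => ?_
          obtain ⟨hv1, hv2⟩ := Finset.mem_filter.1 hv
          rw [Finset.sum_congr rfl
            (fun w hw => by rw [(Finset.mem_filter.1 hw).2] :
              ∀ w ∈ Finset.univ.filter (fun w : Fin J' → Fin K => vOf w = v),
                h (vOf w) ∅ ℓ = h v ∅ ℓ),
            Finset.sum_const, aux_card_fiber hv2, nsmul_eq_mul]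
      _ = 1 := hsol.2.2.2 J' hJ' ℓ
end

section
/- Let {M_ℓ} be reals indexed by partial outcomes and let M be its moment matrix. Assume condition (G3): there exists a set 𝒦 of column indices of M such that (a) any two completions of M of rank ≤ K agree on all columns in 𝒦, and (b) every completion of M of rank ≤ K has the submatrix of its 𝒦-columns of rank exactly K. Then for every solution (α^1,…,α^K, h) of the system (MainEqSys) with data {M_ℓ}: the linear span of α^1,…,α^K equals the linear span of the 𝒦-columns of M̄, where M̄ is any completion of M of rank ≤ K (by (a) the 𝒦-columns of M̄ do not depend on the choice of M̄). -/
/-- A matrix `N` (rows indexed by pairs `(j,l)`, columns indexed by partial outcomes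
`(S,ℓ)` with `S ⊊ [1..J]`) is a completion of the moment matrix of the data `M` if it
agrees with all defined entries: `N_{(j,l),(S,ℓ)} = M_{ℓ∪(j↦l)}` whenever `j ∉ S`. -/
def IsCompletion (J : ℕ) (L : Fin J → ℕ)
    (M : Finset (Fin J) → ((j : Fin J) → Fin (L j)) → ℝ)
    (N : Matrix ((j : Fin J) × Fin (L j))
        ({S : Finset (Fin J) // S ≠ Finset.univ} × ((j : Fin J) → Fin (L j))) ℝ) :
    Prop :=
  ∀ (j : Fin J) (l : Fin (L j)) (S : {S : Finset (Fin J) // S ≠ Finset.univ})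
    (ℓ : (j : Fin J) → Fin (L j)), j ∉ S.1 →
    N ⟨j, l⟩ (S, ℓ) = M (insert j S.1) (Function.update ℓ j l)

/-- Theorem `Main3`. Assume the data `{M_ℓ}` satisfies (G3) with a
set `𝒦` of column indices. Then for every solution `(α,h)` of (MainEqSys) and every
completion `Nbar` of the moment matrix of rank `≤ K`, the span of `α¹,…,αᴷ` equals the
span of the `𝒦`-columns of `Nbar`. -/
theorem stmt15 (J K : ℕ) (hJ : 0 < J) (hK : 0 < K) (L : Fin J → ℕ) (hL : ∀ j, 0 < L j)
    (M : Finset (Fin J) → ((j : Fin J) → Fin (L j)) → ℝ)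
    (hM : ∀ (S : Finset (Fin J)) (ℓ ℓ' : (j : Fin J) → Fin (L j)),
      (∀ j ∈ S, ℓ j = ℓ' j) → M S ℓ = M S ℓ')
    (𝒦 : Finset ({S : Finset (Fin J) // S ≠ Finset.univ} × ((j : Fin J) → Fin (L j))))
    (hG3a : ∀ N N', IsCompletion J L M N → IsCompletion J L M N' →
      N.rank ≤ K → N'.rank ≤ K → ∀ c ∈ 𝒦, ∀ r, N r c = N' r c)
    (hG3b : ∀ N, IsCompletion J L M N → N.rank ≤ K →
      (Matrix.of fun (r : (j : Fin J) × Fin (L j)) (c : 𝒦) => N r c.1).rank = K)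
    (α : Fin K → (j : Fin J) → Fin (L j) → ℝ)
    (h : (Fin K → ℕ) → Finset (Fin J) → ((j : Fin J) → Fin (L j)) → ℝ)
    (hsol : MainEqSys J K L M α h)
    (Nbar : Matrix ((j : Fin J) × Fin (L j))
        ({S : Finset (Fin J) // S ≠ Finset.univ} × ((j : Fin J) → Fin (L j))) ℝ)
    (hcomp : IsCompletion J L M Nbar) (hrank : Nbar.rank ≤ K) :
    Submodule.span ℝ
        (Set.range fun (k : Fin K) (r : (j : Fin J) × Fin (L j)) => α k r.1 r.2) =
      Submodule.span ℝ
        ((fun c (r : (j : Fin J) × Fin (L j)) => Nbar r c) '' (𝒦 : Set _)) := by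
  
  classical
  obtain ⟨hdep, heq1, heq2, -⟩ := hsol
  set A : Matrix ((j : Fin J) × Fin (L j)) (Fin K) ℝ :=
    Matrix.of fun r k => α k r.1 r.2 with hA
  set B : Matrix (Fin K)
      ({S : Finset (Fin J) // S ≠ Finset.univ} × ((j : Fin J) → Fin (L j))) ℝ :=
    Matrix.of fun k c => h (Pi.single k 1) c.1.1 c.2 with hB
  set N := A * B with hN
  have hNentry : ∀ r c, N r c = ∑ k, α k r.1 r.2 * h (Pi.single k 1) c.1.1 c.2 := by
    intro r c
    simp [hN, Matrix.mul_apply, hA, hB]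
  have hNcomp : IsCompletion J L M N := by
    intro j l S ℓ hj
    have hcard : (∑ k, (0 : Fin K → ℕ) k) + S.1.card + 1 ≤ J := by
      have : S.1.card < J := by
        have := Finset.card_lt_card (Finset.ssubset_univ_iff.mpr S.2)
        simpa [Finset.card_univ] using this
      simpa using this
    have key := heq1 0 S.1 ℓ j l hcard hj
    rw [heq2] at key
    rw [hNentry]
    simpa using key
  have hNrank : N.rank ≤ K := by
    calc N.rank ≤ A.rank := Matrix.rank_mul_le_left A B
    _ ≤ Fintype.card (Fin K) := A.rank_le_card_width
    _ = K := Fintype.card_fin K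
  have hagree := hG3a N Nbar hNcomp hcomp hNrank hrank
  set V := Submodule.span ℝ
      (Set.range fun (k : Fin K) (r : (j : Fin J) × Fin (L j)) => α k r.1 r.2) with hV
  set W := Submodule.span ℝ
      ((fun c (r : (j : Fin J) × Fin (L j)) => Nbar r c) '' (𝒦 : Set _)) with hW
  have hWV : W ≤ V := by
    rw [hW, Submodule.span_le]
    rintro _ ⟨c, hc, rfl⟩
    have hcol : (fun r => Nbar r c) =
        ∑ k, h (Pi.single k 1) c.1.1 c.2 • (fun r : (j : Fin J) × Fin (L j) => α k r.1 r.2) := by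
      funext r
      rw [← hagree c hc r, hNentry]
      simp [Finset.sum_apply, mul_comm]
    show (fun r => Nbar r c) ∈ V
    rw [hcol]
    exact Submodule.sum_mem _ fun k _ => Submodule.smul_mem _ _
      (Submodule.subset_span ⟨k, rfl⟩)
  have hWrank : Module.finrank ℝ W = K := by
    have hb := hG3b Nbar hcomp hrank
    rw [Matrix.rank_eq_finrank_span_cols] at hb
    have hrange : Set.range ((Matrix.of fun (r : (j : Fin J) × Fin (L j)) (c : 𝒦) =>
        Nbar r c.1).col) = (fun c (r : (j : Fin J) × Fin (L j)) => Nbar r c) '' (𝒦 : Set _) := by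
      ext x
      constructor
      · rintro ⟨c, rfl⟩
        exact ⟨c.1, c.2, rfl⟩
      · rintro ⟨c, hc, rfl⟩
        exact ⟨⟨c, hc⟩, rfl⟩
    rw [hrange] at hb
    rw [hW, ← hb]
  have hVrank : Module.finrank ℝ V ≤ K := by
    have h1 := Matrix.rank_le_card_width A
    rw [Matrix.rank_eq_finrank_span_cols] at h1
    have hrange : Set.range A.col =
        Set.range fun (k : Fin K) (r : (j : Fin J) × Fin (L j)) => α k r.1 r.2 := rfl
    rw [hrange, Fintype.card_fin] at h1
    rw [hV]
    exact h1
  have hfin : W = V := Submodule.eq_of_le_of_finrank_le hWV (hVrank.trans hWrank.ge)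
  exact hfin.symm
end

section
/- Let Q ⊆ Ω be a K-dimensional linear subspace and let μ be a Borel probability measure on Ω whose support is contained in Q ∩ 𝕊^L, such that no proper linear subspace of Q contains the support of μ. Assume the moment matrix of the data {M_ℓ(μ)} satisfies condition (G3): there exists a set 𝒦 of column indices such that any two completions of rank ≤ K agree on all columns in 𝒦, and every completion of rank ≤ K has the submatrix of its 𝒦-columns of rank exactly K. Then every solution (α^1,…,α^K, h) of the system (MainEqSys) with data {M_ℓ(μ)} satisfies: α^1,…,α^K is a basis of Q, i.e., span(α^1,…,α^K) = Q. -/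
open MeasureTheory

noncomputable def uncur (J : ℕ) (L : Fin J → ℕ) :
    ((j : Fin J) → Fin (L j) → ℝ) ≃ₗ[ℝ] ((r : (j : Fin J) × Fin (L j)) → ℝ) :=
  (LinearEquiv.piCurry ℝ (fun (j : Fin J) (_ : Fin (L j)) => ℝ)).symm

lemma uncur_apply {J : ℕ} {L : Fin J → ℕ} (β : (j : Fin J) → Fin (L j) → ℝ)
    (r : (j : Fin J) × Fin (L j)) : uncur J L β r = β r.1 r.2 := rfl

theorem colmem (J K : ℕ) (hJ : 0 < J) (hK : 0 < K) (L : Fin J → ℕ) (hL : ∀ j, 0 < L j)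
    (Q : Submodule ℝ ((j : Fin J) → Fin (L j) → ℝ))
    (hQ : Module.finrank ℝ Q = K)
    (μ : Measure ((j : Fin J) → Fin (L j) → ℝ)) [IsProbabilityMeasure μ]
    (hsupp : μ {β | β ∈ Q ∧ (∀ j l, 0 ≤ β j l) ∧ ∀ j, ∑ l, β j l = 1} = 1) :
    ∀ S : Finset (Fin J), ∀ ℓ : (j : Fin J) → Fin (L j),
      (fun r : (j : Fin J) × Fin (L j) => ∫ β, β r.1 r.2 * ∏ j ∈ S, β j (ℓ j) ∂μ)
        ∈ Q.map (uncur J L : ((j : Fin J) → Fin (L j) → ℝ) →ₗ[ℝ] _) := by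
  classical
  set Ω := ((j : Fin J) → Fin (L j) → ℝ) with hΩ
  set E := {β : Ω | β ∈ Q ∧ (∀ j l, 0 ≤ β j l) ∧ ∀ j, ∑ l, β j l = 1} with hE
  have hcont : ∀ (j : Fin J) (l : Fin (L j)), Continuous fun β : Ω => β j l :=
    fun j l => (continuous_apply l).comp (continuous_apply j)
  have hEclosed : IsClosed E := by
    have h1 : IsClosed {β : Ω | ∀ j l, 0 ≤ β j l} := by
      have : {β : Ω | ∀ j l, 0 ≤ β j l} = ⋂ j, ⋂ l, {β : Ω | 0 ≤ β j l} := by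
        ext β; simp [Set.mem_iInter]
      rw [this]
      exact isClosed_iInter fun j => isClosed_iInter fun l =>
        isClosed_le continuous_const (hcont j l)
    have h2 : IsClosed {β : Ω | ∀ j, ∑ l, β j l = 1} := by
      have : {β : Ω | ∀ j, ∑ l, β j l = 1} = ⋂ j, {β : Ω | ∑ l, β j l = 1} := by
        ext β; simp [Set.mem_iInter]
      rw [this]
      exact isClosed_iInter fun j =>
        isClosed_eq (continuous_finset_sum _ fun l _ => hcont j l) continuous_const
    have : E = (Q : Set Ω) ∩ ({β : Ω | ∀ j l, 0 ≤ β j l} ∩ {β : Ω | ∀ j, ∑ l, β j l = 1}) := by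
      ext β; simp [hE, Set.mem_setOf_eq, and_assoc]
    rw [this]
    exact Q.closed_of_finiteDimensional.inter (h1.inter h2)
  have hae : ∀ᵐ β ∂μ, β ∈ E := by
    rw [ae_iff]
    have : {β : Ω | ¬ β ∈ E} = Eᶜ := rfl
    rw [this, measure_compl hEclosed.measurableSet (measure_ne_top μ E), hsupp,
      measure_univ, tsub_self]
  -- bounds on E
  have hb : ∀ β ∈ E, ∀ j l, β j l ≤ 1 := by
    intro β hβ j l
    calc β j l ≤ ∑ l', β j l' :=
          Finset.single_le_sum (fun l' _ => hβ.2.1 j l') (Finset.mem_univ l)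
      _ = 1 := hβ.2.2 j
  intro S ℓ
  set w : Ω → ℝ := fun β => ∏ j ∈ S, β j (ℓ j) with hw
  set g : Ω → Ω := fun β => w β • β with hg
  have hgcont : Continuous g := by
    exact (continuous_finset_prod _ fun j _ => hcont j (ℓ j)).smul continuous_id
  have hgint : Integrable g μ := by
    refine ⟨hgcont.aestronglyMeasurable, HasFiniteIntegral.of_bounded (C := 1) ?_⟩
    filter_upwards [hae] with β hβ
    have hw01 : 0 ≤ w β ∧ w β ≤ 1 :=
      ⟨Finset.prod_nonneg fun j _ => hβ.2.1 j (ℓ j),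
       Finset.prod_le_one (fun j _ => hβ.2.1 j (ℓ j)) (fun j _ => hb β hβ j (ℓ j))⟩
    rw [hg]
    refine (pi_norm_le_iff_of_nonneg zero_le_one).2 fun j => ?_
    refine (pi_norm_le_iff_of_nonneg zero_le_one).2 fun l => ?_
    show |w β * β j l| ≤ 1
    rw [abs_mul, abs_of_nonneg hw01.1, abs_of_nonneg (hβ.2.1 j l)]
    exact mul_le_one₀ hw01.2 (hβ.2.1 j l) (hb β hβ j l)
  have hmem : (∫ β, g β ∂μ) ∈ Q := by
    refine Q.convex.integral_mem Q.closed_of_finiteDimensional ?_ hgint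
    filter_upwards [hae] with β hβ
    exact Q.smul_mem _ hβ.1
  refine ⟨∫ β, g β ∂μ, hmem, ?_⟩
  funext r
  show (∫ β, g β ∂μ) r.1 r.2 = _
  have hP : ∀ (r : (j : Fin J) × Fin (L j)),
      (∫ β, g β ∂μ) r.1 r.2 = ∫ β, g β r.1 r.2 ∂μ := by
    intro r
    let P : Ω →L[ℝ] ℝ :=
      (ContinuousLinearMap.proj (R := ℝ) (φ := fun _ : Fin (L r.1) => ℝ) r.2).comp
        (ContinuousLinearMap.proj (R := ℝ) (φ := fun j => Fin (L j) → ℝ) r.1)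
    have := P.integral_comp_comm hgint
    exact this.symm
  rw [hP r]
  congr 1
  funext β
  show w β * β r.1 r.2 = β r.1 r.2 * ∏ j ∈ S, β j (ℓ j)
  rw [mul_comm, hw]


set_option maxHeartbeats 1000000 in
/-- corollary (c) to Theorem `Main3`. If `μ` satisfies (G1), (G2)
(support contained in `Q ∩ 𝕊^L`, `Q` of dimension `K`, no proper subspace of `Q`
containing the support) and the moment matrix of `{M_ℓ(μ)}` satisfies (G3), then for
every solution `(α,h)` of (MainEqSys) with data `{M_ℓ(μ)}`, the family `α¹,…,αᴷ` is a
basis of `Q`: its span equals `Q`. -/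
theorem stmt16 (J K : ℕ) (hJ : 0 < J) (hK : 0 < K) (L : Fin J → ℕ) (hL : ∀ j, 0 < L j)
    (Q : Submodule ℝ ((j : Fin J) → Fin (L j) → ℝ))
    (hQ : Module.finrank ℝ Q = K)
    (μ : Measure ((j : Fin J) → Fin (L j) → ℝ)) [IsProbabilityMeasure μ]
    (hsupp : μ {β | β ∈ Q ∧ (∀ j l, 0 ≤ β j l) ∧ ∀ j, ∑ l, β j l = 1} = 1)
    (hmin : ∀ Q' : Submodule ℝ ((j : Fin J) → Fin (L j) → ℝ),
      Q' < Q → μ {β | β ∈ Q'} ≠ 1)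
    (𝒦 : Finset ({S : Finset (Fin J) // S ≠ Finset.univ} × ((j : Fin J) → Fin (L j))))
    (hG3a : ∀ N N',
      IsCompletion J L (fun S ℓ => ∫ β, ∏ j ∈ S, β j (ℓ j) ∂μ) N →
      IsCompletion J L (fun S ℓ => ∫ β, ∏ j ∈ S, β j (ℓ j) ∂μ) N' →
      N.rank ≤ K → N'.rank ≤ K → ∀ c ∈ 𝒦, ∀ r, N r c = N' r c)
    (hG3b : ∀ N, IsCompletion J L (fun S ℓ => ∫ β, ∏ j ∈ S, β j (ℓ j) ∂μ) N →
      N.rank ≤ K →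
      (Matrix.of fun (r : (j : Fin J) × Fin (L j)) (c : 𝒦) => N r c.1).rank = K)
    (α : Fin K → (j : Fin J) → Fin (L j) → ℝ)
    (h : (Fin K → ℕ) → Finset (Fin J) → ((j : Fin J) → Fin (L j)) → ℝ)
    (hsol : MainEqSys J K L (fun S ℓ => ∫ β, ∏ j ∈ S, β j (ℓ j) ∂μ) α h) :
    Submodule.span ℝ (Set.range α) = Q := by
  classical
  obtain ⟨hfun, heq, hM0, hnorm⟩ := hsol
  set Mdat : Finset (Fin J) → ((j : Fin J) → Fin (L j)) → ℝ :=
    fun S ℓ => ∫ β, ∏ j ∈ S, β j (ℓ j) ∂μ with hMdat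
  set e : ((j : Fin J) → Fin (L j) → ℝ) →ₗ[ℝ] ((r : (j : Fin J) × Fin (L j)) → ℝ) :=
    (uncur J L).toLinearMap with he
  -- the completion from the solution (α, h)
  set A : Matrix ((j : Fin J) × Fin (L j)) (Fin K) ℝ :=
    Matrix.of fun r k => α k r.1 r.2 with hA
  set H : Matrix (Fin K)
      ({S : Finset (Fin J) // S ≠ Finset.univ} × ((j : Fin J) → Fin (L j))) ℝ :=
    Matrix.of fun k c => h (Pi.single k 1) c.1.1 c.2 with hH
  have hcard : ∀ S : {S : Finset (Fin J) // S ≠ Finset.univ}, S.1.card + 1 ≤ J := by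
    intro S
    have := Finset.card_lt_card (Finset.ssubset_univ_iff.mpr S.2)
    simpa [Finset.card_univ] using this
  have hcomp1 : IsCompletion J L Mdat (A * H) := by
    intro j l S ℓ hj
    have key := heq 0 S.1 ℓ j l (by simpa using hcard S) hj
    simp only [Pi.zero_apply, zero_add] at key
    rw [Matrix.mul_apply]
    simp only [hA, hH, Matrix.of_apply]
    rw [key, hM0]
  have hrank1 : (A * H).rank ≤ K :=
    le_trans (le_trans (Matrix.rank_mul_le A H) (min_le_left _ _))
      (by simpa using A.rank_le_card_width)
  -- the completion from the measure
  set Nμ : Matrix ((j : Fin J) × Fin (L j))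
      ({S : Finset (Fin J) // S ≠ Finset.univ} × ((j : Fin J) → Fin (L j))) ℝ :=
    Matrix.of fun r c => ∫ β, β r.1 r.2 * ∏ j ∈ c.1.1, β j (c.2 j) ∂μ with hNμ
  have hcolNμ : ∀ c, Nμ.transpose c ∈ Q.map e := by
    intro c
    exact colmem J K hJ hK L hL Q hQ μ hsupp c.1.1 c.2
  have hcomp2 : IsCompletion J L Mdat Nμ := by
    intro j l S ℓ hj
    show (∫ β, β j l * ∏ j' ∈ S.1, β j' (ℓ j') ∂μ) = Mdat (insert j S.1) (Function.update ℓ j l)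
    rw [hMdat]
    congr 1
    funext β
    rw [Finset.prod_insert hj, Function.update_self]
    congr 1
    exact Finset.prod_congr rfl fun j' hj' => by
      rw [Function.update_of_ne (ne_of_mem_of_not_mem hj' hj)]
  have hrank2 : Nμ.rank ≤ K := by
    rw [Matrix.rank, ← hQ]
    have hle : LinearMap.range Nμ.mulVecLin ≤ Q.map e := by
      rw [Matrix.range_mulVecLin, Submodule.span_le]
      rintro _ ⟨c, rfl⟩
      exact hcolNμ c
    calc Module.finrank ℝ (LinearMap.range Nμ.mulVecLin)
        ≤ Module.finrank ℝ (Q.map e) := Submodule.finrank_mono hle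
      _ = Module.finrank ℝ Q := LinearEquiv.finrank_map_eq (uncur J L) Q
  -- (G3) applied
  have hagree : ∀ c ∈ 𝒦, ∀ r, (A * H) r c = Nμ r c :=
    hG3a (A * H) Nμ hcomp1 hcomp2 hrank1 hrank2
  set B : Matrix ((j : Fin J) × Fin (L j)) 𝒦 ℝ :=
    Matrix.of fun r (c : 𝒦) => (A * H) r c.1 with hB
  have hrankB : B.rank = K := hG3b (A * H) hcomp1 hrank1
  -- column space of B
  have hcolBQ : LinearMap.range B.mulVecLin ≤ Q.map e := by
    rw [Matrix.range_mulVecLin, Submodule.span_le]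
    rintro _ ⟨c, rfl⟩
    have : B.transpose c = Nμ.transpose c.1 := by
      funext r
      exact hagree c.1 c.2 r
    rw [show B.col c = B.transpose c from rfl, this]
    exact hcolNμ c.1
  have hcolBα : LinearMap.range B.mulVecLin ≤ (Submodule.span ℝ (Set.range α)).map e := by
    rw [Matrix.range_mulVecLin, Submodule.span_le]
    rintro _ ⟨c, rfl⟩
    have : B.transpose c = ∑ k, H k c.1 • e (α k) := by
      funext r
      rw [Finset.sum_apply]
      show (A * H) r c.1 = _
      rw [Matrix.mul_apply]
      exact Finset.sum_congr rfl fun k _ => by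
        show α k r.1 r.2 * H k c.1 = (H k c.1 • e (α k)) r
        rw [Pi.smul_apply, smul_eq_mul, mul_comm]
        rfl
    rw [show B.col c = B.transpose c from rfl, this]
    exact Submodule.sum_mem _ fun k _ => Submodule.smul_mem _ _
      (Submodule.mem_map_of_mem (Submodule.subset_span ⟨k, rfl⟩))
  -- dimension count
  have hQeq : Q.map e = LinearMap.range B.mulVecLin := by
    refine (Submodule.eq_of_le_of_finrank_le hcolBQ ?_).symm
    rw [LinearEquiv.finrank_map_eq (uncur J L) Q, hQ]
    rw [Matrix.rank] at hrankB
    rw [hrankB]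
  have hQle : Q ≤ Submodule.span ℝ (Set.range α) := by
    have : Q.map e ≤ (Submodule.span ℝ (Set.range α)).map e := hQeq ▸ hcolBα
    intro x hx
    obtain ⟨y, hy, hxy⟩ := this (Submodule.mem_map_of_mem hx)
    rwa [← (uncur J L).injective hxy]
  refine (Submodule.eq_of_le_of_finrank_le hQle ?_).symm
  rw [hQ]
  have : Module.finrank ℝ (Submodule.span ℝ (Set.range α)) ≤ Fintype.card (Fin K) :=
    finrank_range_le_card α
  simpa using this
end

section
/- Let {M_ℓ} be reals indexed by partial outcomes, and let (α^1,…,α^K, h) and (α^1,…,α^K, h̃) be two solutions of the system (MainEqSys) with data {M_ℓ} sharing the same α. Suppose there are index pairs (j_1,l_1),…,(j_K,l_K), with l_k ∈ {1,…,L_{j_k}}, such that the K×K matrix with entries α^{k'}_{j_k l_k} (row k, column k') is invertible, and set 𝒥₀ = {j_1,…,j_K}. Then for every partial outcome (S,ℓ) with S ∩ 𝒥₀ = ∅ and every k ∈ {1,…,K}: h^{e_k}_ℓ = h̃^{e_k}_ℓ. (In the model interpretation, this says the first-order conditional moments M_ℓ·E(G_k | X = ℓ) are uniquely determined by the system.)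 -/
/-- Theorem `Main4`(a). Let `(α,h)` and `(α,h̃)` be two solutions
of (MainEqSys) with the same data and the same `α`. If there are index pairs
`(j_1,l_1),…,(j_K,l_K)` such that the matrix `(α^{k'}_{j_k l_k})_{k,k'}` is
invertible, then for every partial outcome `(S,ℓ)` with `S ∩ {j_1,…,j_K} = ∅` and
every `k`, the first-order unknowns agree: `h^{e_k}_ℓ = h̃^{e_k}_ℓ`. -/
theorem stmt17 (J K : ℕ) (hJ : 0 < J) (hK : 0 < K) (L : Fin J → ℕ) (hL : ∀ j, 0 < L j)
    (M : Finset (Fin J) → ((j : Fin J) → Fin (L j)) → ℝ)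
    (hM : ∀ (S : Finset (Fin J)) (ℓ ℓ' : (j : Fin J) → Fin (L j)),
      (∀ j ∈ S, ℓ j = ℓ' j) → M S ℓ = M S ℓ')
    (α : Fin K → (j : Fin J) → Fin (L j) → ℝ)
    (h htilde : (Fin K → ℕ) → Finset (Fin J) → ((j : Fin J) → Fin (L j)) → ℝ)
    (hsol : MainEqSys J K L M α h) (hsol' : MainEqSys J K L M α htilde)
    (jj : Fin K → Fin J) (ll : (k : Fin K) → Fin (L (jj k)))
    (hinv : IsUnit (Matrix.det (Matrix.of fun k k' : Fin K => α k' (jj k) (ll k))))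
    (S : Finset (Fin J)) (ℓ : (j : Fin J) → Fin (L j))
    (hdisj : ∀ k, jj k ∉ S) (k : Fin K) :
    h (Pi.single k 1) S ℓ = htilde (Pi.single k 1) S ℓ := by
  obtain ⟨hfun, heq, hM0, -⟩ := hsol
  obtain ⟨hfun', heq', hM0', -⟩ := hsol'
  set A : Matrix (Fin K) (Fin K) ℝ := Matrix.of fun k k' : Fin K => α k' (jj k) (ll k)
  have hAu : IsUnit A := (Matrix.isUnit_iff_isUnit_det A).mpr hinv
  have hAinj : Function.Injective A.mulVec :=
    Matrix.mulVec_injective_iff_isUnit.mpr hAu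
  have hcard : ∀ k0 : Fin K, S.card + 1 ≤ J := by
    intro k0
    have : (insert (jj k0) S).card ≤ J := by
      simpa using Finset.card_le_univ (insert (jj k0) S)
    rwa [Finset.card_insert_of_notMem (hdisj k0)] at this
  have key : A.mulVec (fun k' => h (Pi.single k' 1) S ℓ)
      = A.mulVec (fun k' => htilde (Pi.single k' 1) S ℓ) := by
    funext k0
    have h1 := heq 0 S ℓ (jj k0) (ll k0) (by simpa using hcard k0) (hdisj k0)
    have h2 := heq' 0 S ℓ (jj k0) (ll k0) (by simpa using hcard k0) (hdisj k0)
    simp only [zero_add] at h1 h2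
    simp only [Matrix.mulVec, dotProduct, Matrix.of_apply, A]
    rw [h1, h2, hM0, hM0']
  have := congrFun (hAinj key) k
  simpa using this
end
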